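/- Let g ≥ 1 be an integer. Let w ∈ W̃ with associated vector v ∈ Z (the minimizer, unique up to sign, of |w×u| over u ∈ V with |u| ≤ √2|w|, u ≠ ±w), and let v' ∈ Z satisfy w·v' > 0 and |w×v'| ≤ 1/(2√2). Then w' := w + g·v' belongs to W̃, and if ε := |w||w×v'|/(|v'||w×v|) ≤ 1/5 then the closure of I(w') is contained in I(w), where for u ∈ W̃ with associated vector v_u, I(u) := {θ ∈ S¹ : |u×θ| < |u×v_u|/(2|u|) and u·θ > 0}. -/
import Mathlib


open Pointwise

noncomputable section

/-- Cross product of two vectors in ℝ²: `(a,b) × (c,d) = a d − b c`. -/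
def crossP (u v : ℝ × ℝ) : ℝ := u.1 * v.2 - u.2 * v.1

/-- Euclidean inner product on ℝ². -/
def dotP (u v : ℝ × ℝ) : ℝ := u.1 * v.1 + u.2 * v.2

/-- Euclidean norm on ℝ². -/
def nrm (u : ℝ × ℝ) : ℝ := Real.sqrt (u.1 ^ 2 + u.2 ^ 2)

/-- The set `Z` of primitive integer vectors. -/
def Zset : Set (ℝ × ℝ) := {v | ∃ p q : ℤ, Int.gcd p q = 1 ∧ v = ((p : ℝ), (q : ℝ))}

/-- The set `W = ±(x₀,y₀) + ℤ²`. -/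
def Wset (x₀ y₀ : ℝ) : Set (ℝ × ℝ) :=
  {w | ∃ m n : ℤ, w = (x₀ + m, y₀ + n) ∨ w = (-x₀ + m, -y₀ + n)}

/-- The set `V = W ∪ Z` of holonomy vectors of saddle connections. -/
def Vset (x₀ y₀ : ℝ) : Set (ℝ × ℝ) := Wset x₀ y₀ ∪ Zset

/-- `1, x₀, y₀` are linearly independent over `ℚ`. -/
def QLinIndep (x₀ y₀ : ℝ) : Prop :=
  ∀ a b c : ℚ, (a : ℝ) * x₀ + (b : ℝ) * y₀ + (c : ℝ) = 0 → a = 0 ∧ b = 0 ∧ c = 0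

/-- `w ∈ W̃`: there is `v ∈ Z` with `|v| ≤ √2|w|` and `|w×v| ≤ 1/(2√2)`. -/
def InTildeW (x₀ y₀ : ℝ) (w : ℝ × ℝ) : Prop :=
  w ∈ Wset x₀ y₀ ∧
    ∃ v ∈ Zset, nrm v ≤ Real.sqrt 2 * nrm w ∧ |crossP w v| ≤ 1 / (2 * Real.sqrt 2)

/-- `v` is the vector associated to `w ∈ W̃`: `v ∈ Z` realizes
`min{|w×u| : u ∈ V, |u| ≤ √2|w|, u ≠ ±w}`. -/
def AssocVec (x₀ y₀ : ℝ) (w v : ℝ × ℝ) : Prop :=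
  v ∈ Zset ∧ nrm v ≤ Real.sqrt 2 * nrm w ∧
    IsLeast {r : ℝ | ∃ u ∈ Vset x₀ y₀,
      nrm u ≤ Real.sqrt 2 * nrm w ∧ u ≠ w ∧ u ≠ -w ∧ r = |crossP w u|}
      |crossP w v|

/-- The interval `I(w) = {θ ∈ S¹ : |w×θ| < |w×v_w|/(2|w|), w·θ > 0}` of `w ∈ W̃`
with associated vector `v`. -/
def Iarc (w v : ℝ × ℝ) : Set (ℝ × ℝ) :=
  {θ | nrm θ = 1 ∧ |crossP w θ| < |crossP w v| / (2 * nrm w) ∧ 0 < dotP w θ}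

lemma nrm_nonneg (u : ℝ × ℝ) : 0 ≤ nrm u := Real.sqrt_nonneg _

lemma nrm_sq (u : ℝ × ℝ) : nrm u ^ 2 = u.1 ^ 2 + u.2 ^ 2 := by
  rw [nrm, Real.sq_sqrt (by positivity)]

lemma Z_one_le_nrm {v : ℝ × ℝ} (hv : v ∈ Zset) : 1 ≤ nrm v := by
  obtain ⟨p, q, hg, rfl⟩ := hv
  have h1 : (1:ℝ) ≤ (p:ℝ)^2 + (q:ℝ)^2 := by
    rcases eq_or_ne p 0 with rfl | hp
    · have hq : q ≠ 0 := by rintro rfl; simp at hg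
      have : (1:ℤ) ≤ q^2 := by nlinarith [Int.one_le_abs hq, sq_abs q]
      have : (1:ℝ) ≤ (q:ℝ)^2 := by exact_mod_cast this
      nlinarith [sq_nonneg ((0:ℝ))]
    · have : (1:ℤ) ≤ p^2 := by nlinarith [Int.one_le_abs hp, sq_abs p]
      have : (1:ℝ) ≤ (p:ℝ)^2 := by exact_mod_cast this
      nlinarith [sq_nonneg ((q:ℝ))]
  calc (1:ℝ) = Real.sqrt 1 := Real.sqrt_one.symm
    _ ≤ _ := Real.sqrt_le_sqrt h1

lemma Zset_neg {v : ℝ × ℝ} (hv : v ∈ Zset) : -v ∈ Zset := by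
  obtain ⟨p, q, hg, rfl⟩ := hv
  exact ⟨-p, -q, by simpa using hg, by simp⟩

lemma W_Z_disjoint {x₀ y₀ : ℝ} (hind : QLinIndep x₀ y₀) {u : ℝ × ℝ}
    (hW : u ∈ Wset x₀ y₀) (hZ : u ∈ Zset) : False := by
  obtain ⟨m, n, h⟩ := hW
  obtain ⟨p, q, hg, rfl⟩ := hZ
  rcases h with h | h
  · have h1 : (p:ℝ) = x₀ + m := congrArg Prod.fst h
    have := (hind 1 0 ((m:ℚ) - p) (by push_cast; linarith)).1
    norm_num at this
  · have h1 : (p:ℝ) = -x₀ + m := congrArg Prod.fst h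
    have := (hind 1 0 ((p:ℚ) - m) (by push_cast; linarith)).1
    norm_num at this

lemma cross_ne_zero {x₀ y₀ : ℝ} (hind : QLinIndep x₀ y₀) {w u : ℝ × ℝ}
    (hW : w ∈ Wset x₀ y₀) (hZ : u ∈ Zset) : crossP w u ≠ 0 := by
  obtain ⟨m, n, h⟩ := hW
  obtain ⟨p, q, hg, rfl⟩ := hZ
  intro h0
  rcases h with h | h
  · subst h
    unfold crossP at h0; simp only at h0
    have := hind q (-p) ((m:ℚ)*q - n*p) (by push_cast; ring_nf; ring_nf at h0; linarith)
    have hq : q = 0 := by exact_mod_cast this.1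
    have hp : p = 0 := by have := this.2.1; exact_mod_cast neg_eq_zero.mp (by exact_mod_cast this)
    subst hp; subst hq; simp at hg
  · subst h
    unfold crossP at h0; simp only at h0
    have := hind (-q) p ((m:ℚ)*q - n*p) (by push_cast; ring_nf; ring_nf at h0; linarith)
    have hq : q = 0 := by have := this.1; exact_mod_cast neg_eq_zero.mp (by exact_mod_cast this)
    have hp : p = 0 := by exact_mod_cast this.2.1
    subst hp; subst hq; simp at hg

lemma Wset_neg {x₀ y₀ : ℝ} {u : ℝ × ℝ} (hW : u ∈ Wset x₀ y₀) : -u ∈ Wset x₀ y₀ := by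
  obtain ⟨m, n, h⟩ := hW
  rcases h with h | h
  · exact ⟨-m, -n, Or.inr (by rw [h]; apply Prod.ext <;> simp <;> ring)⟩
  · exact ⟨-m, -n, Or.inl (by rw [h]; apply Prod.ext <;> simp <;> ring)⟩

set_option maxHeartbeats 1000000 in
/-- Lemma "Nested".  If `w ∈ W̃` has associated vector `v`, and `v' ∈ Z`
satisfies `w·v' > 0`, `|w×v'| ≤ 1/(2√2)`, then `w' = w + g v' ∈ W̃`; moreover if
`ε = |w||w×v'|/(|v'||w×v|) ≤ 1/5` then `closure I(w') ⊆ I(w)`. -/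
theorem slowly_divergent_nested
    (g : ℕ) (hg : 1 ≤ g) (x₀ y₀ : ℝ) (hind : QLinIndep x₀ y₀)
    (w v : ℝ × ℝ) (hw : InTildeW x₀ y₀ w) (hv : AssocVec x₀ y₀ w v)
    (v' : ℝ × ℝ) (hv' : v' ∈ Zset) (hdot : 0 < dotP w v')
    (hcr : |crossP w v'| ≤ 1 / (2 * Real.sqrt 2)) :
    InTildeW x₀ y₀ (w + (g : ℝ) • v') ∧
      (nrm w * |crossP w v'| / (nrm v' * |crossP w v|) ≤ 1 / 5 →
        ∀ v'' : ℝ × ℝ, AssocVec x₀ y₀ (w + (g : ℝ) • v') v'' →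
          closure (Iarc (w + (g : ℝ) • v') v'') ⊆ Iarc w v) := by
  
  obtain ⟨hwW, v₀, hv₀Z, hv₀n, hv₀c⟩ := hw
  set w' := w + (g:ℝ) • v' with hw'def
  have hP1 : w'.1 = w.1 + (g:ℝ) * v'.1 := rfl
  have hP2 : w'.2 = w.2 + (g:ℝ) * v'.2 := rfl
  have hA := nrm_sq w
  have hB := nrm_sq w'
  have hC := nrm_sq v'
  have hA0 := nrm_nonneg w
  have hB0 := nrm_nonneg w'
  have hC0 := nrm_nonneg v'
  have hC1 : 1 ≤ nrm v' := Z_one_le_nrm hv'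
  have hg1 : (1:ℝ) ≤ (g:ℝ) := by exact_mod_cast hg
  have hs2 : Real.sqrt 2 ^ 2 = 2 := Real.sq_sqrt (by norm_num)
  have hs20 : 0 < Real.sqrt 2 := Real.sqrt_pos.mpr (by norm_num)
  have hs21 : 1 ≤ Real.sqrt 2 := by nlinarith
  have hBsq : nrm w' ^ 2 = nrm w ^ 2 + 2*(g:ℝ)*(dotP w v') + (g:ℝ)^2 * nrm v' ^ 2 := by
    rw [hA, hB, hC, hP1, hP2]; unfold dotP; ring
  -- |w| ≥ 1/√2
  have hA2 : 1 ≤ 2 * nrm w ^ 2 := by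
    have h' : 1 ≤ Real.sqrt 2 * nrm w := le_trans (Z_one_le_nrm hv₀Z) hv₀n
    nlinarith [mul_le_mul h' h' zero_le_one (le_trans zero_le_one h')]
  have hApos : 0 < nrm w := by nlinarith
  have hAB : nrm w ≤ nrm w' := by
    have h : nrm w ^ 2 ≤ nrm w' ^ 2 := by nlinarith [sq_nonneg ((g:ℝ) * nrm v')]
    calc nrm w = Real.sqrt (nrm w ^ 2) := (Real.sqrt_sq hA0).symm
      _ ≤ Real.sqrt (nrm w' ^ 2) := Real.sqrt_le_sqrt h
      _ = nrm w' := Real.sqrt_sq hB0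
  have hgCB : (g:ℝ) * nrm v' ≤ nrm w' := by
    have h : ((g:ℝ) * nrm v') ^ 2 ≤ nrm w' ^ 2 := by nlinarith [sq_nonneg (nrm w)]
    calc (g:ℝ) * nrm v' = Real.sqrt (((g:ℝ) * nrm v') ^ 2) :=
        (Real.sqrt_sq (by positivity)).symm
      _ ≤ Real.sqrt (nrm w' ^ 2) := Real.sqrt_le_sqrt h
      _ = nrm w' := Real.sqrt_sq hB0
  have hCB : nrm v' ≤ nrm w' := by nlinarith
  have hB1 : 1 ≤ nrm w' := le_trans hC1 hCB
  have hBpos : 0 < nrm w' := lt_of_lt_of_le one_pos hB1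
  have hcross' : crossP w' v' = crossP w v' := by
    unfold crossP; rw [hP1, hP2]; ring
  -- w' ∈ W
  have hWmem : w' ∈ Wset x₀ y₀ := by
    obtain ⟨m, n, h⟩ := hwW
    obtain ⟨p, q, hgpq, hv'eq⟩ := hv'
    rcases h with h | h
    · refine ⟨m + g * p, n + g * q, Or.inl ?_⟩
      apply Prod.ext
      · rw [hP1]; rw [h, hv'eq]; push_cast; ring
      · rw [hP2]; rw [h, hv'eq]; push_cast; ring
    · refine ⟨m + g * p, n + g * q, Or.inr ?_⟩
      apply Prod.ext
      · rw [hP1]; rw [h, hv'eq]; push_cast; ring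
      · rw [hP2]; rw [h, hv'eq]; push_cast; ring
  have hle' : nrm v' ≤ Real.sqrt 2 * nrm w' := le_trans hCB (by nlinarith)
  refine ⟨⟨hWmem, v', hv', hle', by rw [hcross']; exact hcr⟩, ?_⟩
  intro hε v'' hv''
  -- basic facts about v, minimality etc.
  have hYne : crossP w v ≠ 0 := cross_ne_zero hind hwW hv.1
  have hY0 : 0 < |crossP w v| := abs_pos.mpr hYne
  have hε' : 5 * (nrm w * |crossP w v'|) ≤ nrm v' * |crossP w v| := by
    have hpos : 0 < nrm v' * |crossP w v| := by positivity
    have h := (div_le_iff₀ hpos).mp hε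
    linarith only [h]
  have hne1 : v' ≠ w' := fun h => W_Z_disjoint hind hWmem (h ▸ hv')
  have hne2 : v' ≠ -w' := by
    intro h
    exact W_Z_disjoint hind (Wset_neg hWmem) (h ▸ hv')
  have hS : |crossP w' v''| ≤ |crossP w v'| := by
    have hmem : |crossP w' v'| ∈ {r : ℝ | ∃ u ∈ Vset x₀ y₀,
        nrm u ≤ Real.sqrt 2 * nrm w' ∧ u ≠ w' ∧ u ≠ -w' ∧ r = |crossP w' u|} :=
      ⟨v', Or.inr hv', hle', hne1, hne2, rfl⟩
    have := hv''.2.2.2 hmem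
    rwa [hcross'] at this
  -- closed superset of Iarc w' v''
  have hcont1 : Continuous (fun θ : ℝ × ℝ => nrm θ) := by
    unfold nrm; fun_prop
  have hcont2 : Continuous (fun θ : ℝ × ℝ => |crossP w' θ|) := by
    unfold crossP; fun_prop
  have hcont3 : Continuous (fun θ : ℝ × ℝ => dotP w' θ) := by
    unfold dotP; fun_prop
  have hKsub : closure (Iarc w' v'') ⊆
      {θ : ℝ × ℝ | nrm θ = 1} ∩ ({θ | |crossP w' θ| ≤ |crossP w' v''| / (2 * nrm w')}
        ∩ {θ | 0 ≤ dotP w' θ}) := by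
    apply closure_minimal
    · rintro θ ⟨h1, h2, h3⟩
      exact ⟨h1, le_of_lt h2, le_of_lt h3⟩
    · exact (isClosed_eq hcont1 continuous_const).inter
        ((isClosed_le hcont2 continuous_const).inter
          (isClosed_le continuous_const hcont3))
  intro θ hθ
  obtain ⟨hθ1, hθ2, hθ3⟩ := hKsub hθ
  simp only [Set.mem_setOf_eq] at hθ1 hθ2 hθ3
  have hθu : θ.1 ^ 2 + θ.2 ^ 2 = 1 := by
    have h : nrm θ ^ 2 = 1 := by rw [hθ1]; norm_num
    rw [nrm_sq] at h; exact h
  have idP : dotP w' θ ^ 2 + crossP w' θ ^ 2 = nrm w' ^ 2 := by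
    have h : dotP w' θ ^ 2 + crossP w' θ ^ 2 =
        (w'.1 ^ 2 + w'.2 ^ 2) * (θ.1 ^ 2 + θ.2 ^ 2) := by
      unfold dotP crossP; ring
    rw [hθu, mul_one] at h; rw [hB]; exact h
  have idCross : crossP w θ * nrm w' ^ 2 =
      dotP w' θ * ((g:ℝ) * crossP w v') + crossP w' θ * dotP w w' := by
    rw [hB]; unfold dotP crossP; rw [hP1, hP2]; ring
  have idDot : dotP w θ * nrm w' ^ 2 =
      dotP w' θ * dotP w w' - crossP w' θ * ((g:ℝ) * crossP w v') := by
    rw [hB]; unfold dotP crossP; rw [hP1, hP2]; ring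
  have hCSid : dotP w w' ^ 2 + crossP w w' ^ 2 = nrm w ^ 2 * nrm w' ^ 2 := by
    rw [hA, hB]; unfold dotP crossP; ring
  have hCS : dotP w w' ≤ nrm w * nrm w' := by
    nlinarith only [hCSid, sq_nonneg (crossP w w'), mul_nonneg hA0 hB0,
      sq_nonneg (dotP w w' - nrm w * nrm w'), sq_nonneg (dotP w w' + nrm w * nrm w')]
  have hdww' : dotP w w' = nrm w ^ 2 + (g:ℝ) * dotP w v' := by
    rw [hA]; unfold dotP; rw [hP1, hP2]; ring
  have hd12 : 1 ≤ 2 * dotP w w' := by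
    nlinarith only [hdww', hA2, hdot, hg1]
  have hdpos : 0 ≤ dotP w w' := by linarith only [hd12]
  have hB2 : 1 ≤ nrm w' ^ 2 := by
    nlinarith only [mul_le_mul hB1 hB1 zero_le_one hB0]
  -- X bounds
  have hX2 : 8 * crossP w v' ^ 2 ≤ 1 := by
    have h1 : |crossP w v'| * (2 * Real.sqrt 2) ≤ 1 := by
      rw [← le_div_iff₀ (by positivity)]; exact hcr
    have h2 := mul_le_mul h1 h1 (by positivity) zero_le_one
    have h3 : (|crossP w v'| * (2 * Real.sqrt 2)) * (|crossP w v'| * (2 * Real.sqrt 2))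
        = (|crossP w v'| * |crossP w v'|) * (4 * Real.sqrt 2 ^ 2) := by ring
    rw [abs_mul_abs_self, hs2] at h3
    linarith only [h2, h3]
  have hX2' : 8 * (|crossP w v'| * |crossP w v'|) ≤ 1 := by
    rw [abs_mul_abs_self]; linarith only [hX2]
  have hβ : |crossP w' θ| * (2 * nrm w') ≤ |crossP w v'| := by
    have h := (le_div_iff₀ (by positivity : (0:ℝ) < 2 * nrm w')).mp hθ2
    exact le_trans h hS
  have hα0 : 0 ≤ dotP w' θ := hθ3
  have hαB : dotP w' θ ≤ nrm w' := by
    nlinarith only [idP, sq_nonneg (crossP w' θ), hα0, hB0]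
  -- β is small
  have hβ2 : (crossP w' θ * crossP w' θ) * (4 * nrm w' ^ 2) ≤
      crossP w v' * crossP w v' := by
    have h := mul_self_le_mul_self
      (by positivity : (0:ℝ) ≤ |crossP w' θ| * (2 * nrm w')) hβ
    have e : (|crossP w' θ| * (2 * nrm w')) * (|crossP w' θ| * (2 * nrm w')) =
        (|crossP w' θ| * |crossP w' θ|) * (4 * nrm w' ^ 2) := by ring
    rw [abs_mul_abs_self] at e
    have e2 : |crossP w v'| * |crossP w v'| = crossP w v' * crossP w v' :=
      abs_mul_abs_self _
    linarith only [h, e, e2]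
  have hβsmall : 32 * (crossP w' θ * crossP w' θ) ≤ 1 := by
    have key : (0:ℝ) ≤ (crossP w' θ * crossP w' θ) * (nrm w' ^ 2 - 1) :=
      mul_nonneg (mul_self_nonneg _) (by linarith only [hB2])
    linarith only [hβ2, hX2, key]
  -- α is big : 9 B ≤ 10 α
  have hα9 : 9 * nrm w' ≤ 10 * dotP w' θ := by
    have hpos : (0:ℝ) < 10 * dotP w' θ + 9 * nrm w' := by
      linarith only [hα0, hBpos]
    nlinarith only [idP, hβsmall, hB2, hα0, hpos]
  refine ⟨hθ1, ?_, ?_⟩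
  · -- the cross product inequality
    rw [lt_div_iff₀ (by positivity)]
    have e1 : |crossP w θ| * nrm w' ^ 2 ≤
        nrm w' * ((g:ℝ) * |crossP w v'|) + |crossP w' θ| * (nrm w * nrm w') := by
      calc |crossP w θ| * nrm w' ^ 2 = |crossP w θ * nrm w' ^ 2| := by
            rw [abs_mul, abs_of_nonneg (by positivity : (0:ℝ) ≤ nrm w' ^ 2)]
        _ = |dotP w' θ * ((g:ℝ) * crossP w v') + crossP w' θ * dotP w w'| := by
            rw [idCross]
        _ ≤ |dotP w' θ * ((g:ℝ) * crossP w v')| + |crossP w' θ * dotP w w'| :=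
            abs_add_le _ _
        _ = dotP w' θ * ((g:ℝ) * |crossP w v'|) + |crossP w' θ| * dotP w w' := by
            rw [abs_mul, abs_mul, abs_mul, abs_of_nonneg hα0, abs_of_nonneg hdpos,
              abs_of_nonneg (by positivity : (0:ℝ) ≤ (g:ℝ))]
        _ ≤ nrm w' * ((g:ℝ) * |crossP w v'|) + |crossP w' θ| * (nrm w * nrm w') := by
            have t1 : dotP w' θ * ((g:ℝ) * |crossP w v'|) ≤
                nrm w' * ((g:ℝ) * |crossP w v'|) :=
              mul_le_mul_of_nonneg_right hαB (by positivity)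
            have t2 : |crossP w' θ| * dotP w w' ≤ |crossP w' θ| * (nrm w * nrm w') :=
              mul_le_mul_of_nonneg_left hCS (abs_nonneg _)
            linarith only [t1, t2]
    have hCA : nrm v' * nrm w ≤ nrm w' ^ 2 := by
      have h := mul_le_mul hCB hAB hA0 hB0
      linarith only [h, sq_nonneg (nrm w')]
    have e2 : 2 * nrm v' * |crossP w θ| ≤ 3 * |crossP w v'| := by
      have e1' := mul_le_mul_of_nonneg_left e1
        (by positivity : (0:ℝ) ≤ 2 * nrm v')
      have t1 : 2 * nrm v' * (nrm w' * ((g:ℝ) * |crossP w v'|)) ≤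
          2 * nrm w' ^ 2 * |crossP w v'| := by
        have h := mul_le_mul_of_nonneg_right hgCB
          (by positivity : (0:ℝ) ≤ 2 * nrm w' * |crossP w v'|)
        linarith only [h]
      have t2 : 2 * nrm v' * (|crossP w' θ| * (nrm w * nrm w')) ≤
          nrm w' ^ 2 * |crossP w v'| := by
        have u1 := mul_le_mul_of_nonneg_right hβ
          (by positivity : (0:ℝ) ≤ nrm v' * nrm w)
        have u2 := mul_le_mul_of_nonneg_left hCA (abs_nonneg (crossP w v'))
        linarith only [u1, u2]
      have hfin : 2 * nrm v' * |crossP w θ| * nrm w' ^ 2 ≤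
          3 * |crossP w v'| * nrm w' ^ 2 := by linarith only [e1', t1, t2]
      have hsq : (0:ℝ) < nrm w' ^ 2 := by positivity
      exact le_of_mul_le_mul_right (by linarith only [hfin]) hsq
    -- conclude with ε
    have q1 := mul_le_mul_of_nonneg_left e2 (by positivity : (0:ℝ) ≤ 5 * nrm w)
    have q3 : 10 * (nrm w * |crossP w θ|) * nrm v' ≤
        3 * |crossP w v| * nrm v' := by linarith only [q1, hε']
    have q4 : 10 * (nrm w * |crossP w θ|) ≤ 3 * |crossP w v| :=
      le_of_mul_le_mul_right (by linarith only [q3])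
        (by linarith only [hC1] : (0:ℝ) < nrm v')
    linarith only [q4, hY0]
  · -- positivity of dotP w θ
    have h20 : 9 * nrm w' ≤ 20 * (dotP w' θ * dotP w w') := by
      have h := mul_le_mul hα9 hd12 zero_le_one
        (by positivity : (0:ℝ) ≤ 10 * dotP w' θ)
      linarith only [h]
    have p1 : |crossP w' θ| * (2 * nrm w') * ((g:ℝ) * nrm v') ≤
        |crossP w v'| * nrm w' :=
      mul_le_mul hβ hgCB (by positivity) (abs_nonneg _)
    have p2 := mul_le_mul_of_nonneg_right p1 (abs_nonneg (crossP w v'))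
    have p3 := mul_le_mul_of_nonneg_right hX2' hB0
    have h8 : 16 * (|crossP w' θ| * ((g:ℝ) * |crossP w v'|)) * nrm v' * nrm w' ≤
        1 * nrm w' := by linarith only [p2, p3]
    have h16 : 16 * (|crossP w' θ| * ((g:ℝ) * |crossP w v'|)) * nrm v' ≤ 1 :=
      le_of_mul_le_mul_right (by linarith only [h8]) hBpos
    have habs1 : crossP w' θ * ((g:ℝ) * crossP w v') ≤
        |crossP w' θ| * ((g:ℝ) * |crossP w v'|) := by
      calc crossP w' θ * ((g:ℝ) * crossP w v')
          ≤ |crossP w' θ * ((g:ℝ) * crossP w v')| := le_abs_self _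
        _ = |crossP w' θ| * ((g:ℝ) * |crossP w v'|) := by
            rw [abs_mul, abs_mul, abs_of_nonneg (by positivity : (0:ℝ) ≤ (g:ℝ))]
    have hBC1 : 1 ≤ nrm w' * nrm v' := by
      have h := mul_le_mul hB1 hC1 zero_le_one hB0
      linarith only [h]
    have idDot' : dotP w θ * nrm w' ^ 2 * (80 * nrm v') =
        dotP w' θ * dotP w w' * (80 * nrm v') -
          crossP w' θ * ((g:ℝ) * crossP w v') * (80 * nrm v') := by
      rw [idDot]; ring
    have r1 := mul_le_mul_of_nonneg_right h20
      (by linarith only [hC1] : (0:ℝ) ≤ 4 * nrm v')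
    have r2 := mul_le_mul_of_nonneg_right habs1
      (by linarith only [hC1] : (0:ℝ) ≤ 80 * nrm v')
    by_contra hcon
    push_neg at hcon
    have hneg : dotP w θ * (nrm w' ^ 2 * (80 * nrm v')) ≤ 0 :=
      mul_nonpos_of_nonpos_of_nonneg hcon (by positivity)
    linarith only [idDot', r1, r2, h16, hBC1, hneg]
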